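/- Let (m, N, a) be a triple as in the context satisfying condition (⋆), and let n be an integer with gcd(n, m) = 1 and 2n ≢ 0 (mod m). Then the product d_n·d_{m−n} is either 0 or N − 3; moreover, if it is nonzero then {d_n, d_{m−n}} = {1, N − 3}. -/

import Mathlib

open Finset

/-- The dimension `d_n` of the Hodge eigenspace: `d_n = (1/m)·∑_i ((n·a_i) mod m) − 1`,
where `(x mod m)` is the representative of `x` in `{0, …, m−1}` (here `Int.emod`,
which lands in `{0, …, m−1}` since `m > 0`). -/
def hodgeDim (m N : ℕ) (a : Fin N → ℤ) (n : ℤ) : ℚ :=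
  ((∑ i, (n * a i) % (m : ℤ) :) : ℚ) / m - 1

/-- The hypotheses on a triple `(m, N, a)`: `m ≥ 2`, `N ≥ 4`, `1 ≤ a_i ≤ m − 1` for all `i`,
`gcd(m, a_1, …, a_N) = 1`, and `a_1 + ⋯ + a_N ≡ 0 (mod m)`. -/
def IsTriple (m N : ℕ) (a : Fin N → ℤ) : Prop :=
  2 ≤ m ∧ 4 ≤ N ∧ (∀ i, 1 ≤ a i ∧ a i ≤ (m : ℤ) - 1) ∧
    Int.gcd (m : ℤ) (Finset.univ.gcd a) = 1 ∧ ((m : ℤ) ∣ ∑ i, a i)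

/-- Condition (⋆): `N − 3 = ∑_{n=1}^{⌊(m−1)/2⌋} d_n·d_{m−n} + ε`, where
`ε = d_{m/2}(d_{m/2}+1)/2` if `m` is even and `ε = 0` if `m` is odd. -/
def CondStar (m N : ℕ) (a : Fin N → ℤ) : Prop :=
  (N : ℚ) - 3 =
    (∑ n ∈ Finset.Icc 1 ((m - 1) / 2), hodgeDim m N a n * hodgeDim m N a ((m : ℤ) - n)) +
      if m % 2 = 0 then hodgeDim m N a (m / 2) * (hodgeDim m N a (m / 2) + 1) / 2 else 0

/-- Two `N`-tuples are equivalent (for the modulus `m`) if there is `t` with `gcd(t, m) = 1`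
and a permutation `σ` with `a'_i ≡ t·a_{σ(i)} (mod m)` for all `i`. -/
def EquivTuple (m N : ℕ) (a a' : Fin N → ℤ) : Prop :=
  ∃ t : ℤ, Int.gcd t m = 1 ∧ ∃ σ : Equiv.Perm (Fin N),
    ∀ i, a' i ≡ t * a (σ i) [ZMOD (m : ℤ)]

/-- The twenty triples, each given as the pair of `m` and the tuple `a`
(the number of branch points `N` being the length of the tuple). -/
def twentyTriples : List (ℕ × List ℕ) :=
  [(2, [1,1,1,1]), (2, [1,1,1,1,1,1]), (3, [1,1,2,2]), (4, [1,2,2,3]),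
   (6, [2,3,3,4]), (3, [1,1,1,1,2]), (4, [1,1,1,1]), (4, [1,1,2,2,2]),
   (6, [1,3,4,4]), (3, [1,1,1,1,1,1]), (5, [1,3,3,3]), (6, [1,1,1,3]),
   (6, [1,1,2,2]), (6, [2,2,2,3,3]), (8, [2,4,5,5]), (5, [2,2,2,2,2]),
   (7, [2,4,4,4]), (10, [3,5,6,6]), (9, [3,5,5,5]), (12, [4,6,7,7])]

/-!
For `m ∤ n` the sum `∑ᵢ (n aᵢ mod m)` is a positive multiple of `m` (positive because
`gcd(m, a) = 1`), so `d_n` is a nonnegative integer. For `n` prime to `m` no `n aᵢ` is divisible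
by `m`, so the residues of `n aᵢ` and `(m − n) aᵢ` add up to `m` and `d_n + d_{m−n} = N − 2`.
When `2n ≢ 0`, the product `d_n d_{m−n}` is one of the nonnegative terms of (⋆), hence at most
`N − 3`. Finally, nonnegative integers with `x + y = N − 2` and `0 < xy ≤ N − 3` satisfy
`0 ≤ (x − 1)(y − 1) = xy − (N − 3) ≤ 0`, so one of them is `1` and the other `N − 3`.
-/

theorem Finset.exists_not_dvd_mul_of_isCoprime_gcd {ι : Type*} {s : Finset ι} {f : ι → ℤ}
    {m n : ℤ} (hcop : IsCoprime m (s.gcd f)) (hn : ¬ m ∣ n) : ∃ i ∈ s, ¬ m ∣ n * f i := by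
  by_contra! h
  have hdvd : m ∣ s.gcd (n * f ·) := Finset.dvd_gcd h
  rw [Finset.gcd_mul_left] at hdvd
  exact hn (dvd_normalize_iff.mp (hcop.dvd_of_dvd_mul_right hdvd))

theorem Int.not_dvd_of_pos_of_lt {m n : ℤ} (h0 : 0 < n) (hn : n < m) : ¬ m ∣ n :=
  fun h ↦ (Int.le_of_dvd h0 h).not_gt hn

theorem Int.emod_add_mul_sub_emod {m n x : ℤ} (hm : 0 < m) (h : ¬ m ∣ n * x) :
    n * x % m + (m - n) * x % m = m := by
  rw [show (m - n) * x = -(n * x) + m * x by ring, Int.add_mul_emod_self_left, Int.neg_emod,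
    if_neg h, Int.natAbs_of_nonneg hm.le]
  ring

section hodgeDim

variable {m N : ℕ} {a : Fin N → ℤ}

theorem hodgeDim_congr {n n' : ℤ} (h : n ≡ n' [ZMOD m]) :
    hodgeDim m N a n = hodgeDim m N a n' := by
  unfold hodgeDim
  congr 3
  exact Finset.sum_congr rfl fun i _ ↦ h.mul_right (a i)

theorem dvd_sum_mul_emod (hsum : (m : ℤ) ∣ ∑ i, a i) (n : ℤ) :
    (m : ℤ) ∣ ∑ i, n * a i % m := by
  rw [Int.dvd_iff_emod_eq_zero, ← Finset.sum_int_mod, ← Finset.mul_sum]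
  exact Int.emod_eq_zero_of_dvd (hsum.mul_left n)

theorem exists_hodgeDim_eq_intCast (hsum : (m : ℤ) ∣ ∑ i, a i) (n : ℤ) :
    ∃ z : ℤ, hodgeDim m N a n = z := by
  rcases eq_or_ne m 0 with rfl | hm
  · exact ⟨-1, by simp [hodgeDim]⟩
  obtain ⟨t, ht⟩ := dvd_sum_mul_emod hsum n
  refine ⟨t - 1, ?_⟩
  rw [hodgeDim, ht]
  push_cast
  field_simp

theorem hodgeDim_nonneg (hm : 0 < m) (hgcd : Int.gcd m (Finset.univ.gcd a) = 1)
    (hsum : (m : ℤ) ∣ ∑ i, a i) {n : ℤ} (hn : ¬ (m : ℤ) ∣ n) : 0 ≤ hodgeDim m N a n := by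
  have hmz : (0 : ℤ) < m := by exact_mod_cast hm
  obtain ⟨i, -, hi⟩ := Finset.exists_not_dvd_mul_of_isCoprime_gcd
    (Int.isCoprime_iff_gcd_eq_one.mpr hgcd) hn
  have hpos : 0 < ∑ j, n * a j % m :=
    (Int.emod_pos_of_not_dvd hi).resolve_left hmz.ne' |>.trans_le <|
      Finset.single_le_sum (fun j _ ↦ Int.emod_nonneg _ hmz.ne') (Finset.mem_univ i)
  have hle : (m : ℤ) ≤ ∑ j, n * a j % m := Int.le_of_dvd hpos (dvd_sum_mul_emod hsum n)
  rw [hodgeDim, sub_nonneg, one_le_div (by exact_mod_cast hm)]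
  exact_mod_cast hle

theorem hodgeDim_add_hodgeDim_sub (hm : 0 < m) (ha : ∀ i, ¬ (m : ℤ) ∣ a i) {n : ℤ}
    (hn : IsCoprime n m) : hodgeDim m N a n + hodgeDim m N a (m - n) = N - 2 := by
  have hmz : (0 : ℤ) < m := by exact_mod_cast hm
  have hS : ∑ i, (n * a i % m + (m - n) * a i % m) = N * m := by
    simp [Int.emod_add_mul_sub_emod hmz fun h ↦ ha _ (hn.symm.dvd_of_dvd_mul_left h)]
  have hS' : ((∑ i, n * a i % m : ℤ) : ℚ) + ((∑ i, (m - n) * a i % m : ℤ) : ℚ) = N * m := by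
    exact_mod_cast Finset.sum_add_distrib.symm.trans hS
  unfold hodgeDim
  field_simp
  linear_combination hS'

end hodgeDim

theorem Int.mul_eq_zero_or_of_add_eq_of_mul_le {x y k : ℤ} (hx : 0 ≤ x) (hy : 0 ≤ y)
    (hsum : x + y = k + 1) (hprod : x * y ≤ k) :
    (x * y = 0 ∨ x * y = k) ∧ (x * y ≠ 0 → (x = 1 ∧ y = k) ∨ (x = k ∧ y = 1)) := by
  suffices h : x * y ≠ 0 → (x = 1 ∧ y = k) ∨ (x = k ∧ y = 1) by
    refine ⟨?_, h⟩
    by_cases h0 : x * y = 0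
    · exact .inl h0
    · rcases h h0 with ⟨rfl, rfl⟩ | ⟨rfl, rfl⟩ <;> simp
  intro h0
  obtain ⟨hx0, hy0⟩ := mul_ne_zero_iff.mp h0
  have hfac : (x - 1) * (y - 1) = 0 :=
    le_antisymm (by linear_combination hprod - hsum) (mul_nonneg (by omega) (by omega))
  rcases mul_eq_zero.mp hfac with h | h
  · exact .inl ⟨by omega, by omega⟩
  · exact .inr ⟨by omega, by omega⟩

section condStar

variable {m N : ℕ} {a : Fin N → ℤ}

theorem hodgeDim_nonneg_of_pos_of_lt (ht : IsTriple m N a) {n : ℤ} (h0 : 0 < n) (hn : n < m) :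
    0 ≤ hodgeDim m N a n :=
  hodgeDim_nonneg (by have := ht.1; omega) ht.2.2.2.1 ht.2.2.2.2 (Int.not_dvd_of_pos_of_lt h0 hn)

theorem hodgeDim_mul_le_of_mem_Icc (ht : IsTriple m N a) (hstar : CondStar m N a) {k : ℕ}
    (hk : k ∈ Finset.Icc 1 ((m - 1) / 2)) :
    hodgeDim m N a k * hodgeDim m N a (m - k) ≤ N - 3 := by
  have hm := ht.1
  have hterm : ∀ j ∈ Finset.Icc 1 ((m - 1) / 2),
      0 ≤ hodgeDim m N a j * hodgeDim m N a (m - j) := by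
    intro j hj
    rw [Finset.mem_Icc] at hj
    exact mul_nonneg (hodgeDim_nonneg_of_pos_of_lt ht (by omega) (by omega))
      (hodgeDim_nonneg_of_pos_of_lt ht (by omega) (by omega))
  have hε : 0 ≤ if m % 2 = 0 then
      hodgeDim m N a (m / 2) * (hodgeDim m N a (m / 2) + 1) / 2 else 0 := by
    have hd : 0 ≤ hodgeDim m N a (m / 2) := hodgeDim_nonneg_of_pos_of_lt ht (by omega) (by omega)
    split_ifs <;> positivity
  rw [CondStar] at hstar
  linarith [Finset.single_le_sum hterm hk]

theorem hodgeDim_mul_le_of_condStar (ht : IsTriple m N a) (hstar : CondStar m N a) {n : ℤ}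
    (h2n : ¬ (m : ℤ) ∣ 2 * n) : hodgeDim m N a n * hodgeDim m N a (m - n) ≤ N - 3 := by
  have hm := ht.1
  have hmz : (0 : ℤ) < m := by omega
  obtain ⟨k, hk⟩ : ∃ k : ℕ, (k : ℤ) = n % m := ⟨_, Int.toNat_of_nonneg (Int.emod_nonneg _ hmz.ne')⟩
  have hnk : n ≡ k [ZMOD m] := hk ▸ (Int.mod_modEq n m).symm
  have hk0 : k ≠ 0 := by
    rintro rfl
    exact h2n (dvd_mul_of_dvd_right (Int.modEq_zero_iff_dvd.mp hnk) 2)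
  have hkm : k < m := by have := Int.emod_lt_of_pos n hmz; omega
  have h2k : 2 * k ≠ m := by
    intro h
    refine h2n (Int.modEq_zero_iff_dvd.mp ((hnk.mul_left 2).trans ?_))
    exact Int.modEq_zero_iff_dvd.mpr ⟨1, by omega⟩
  rw [hodgeDim_congr hnk, hodgeDim_congr (hnk.sub_left _)]
  rcases le_or_gt k ((m - 1) / 2) with hle | hgt
  · exact hodgeDim_mul_le_of_mem_Icc ht hstar (Finset.mem_Icc.mpr ⟨by omega, hle⟩)
  · have := hodgeDim_mul_le_of_mem_Icc ht hstar (k := m - k)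
      (Finset.mem_Icc.mpr ⟨by omega, by omega⟩)
    rwa [Nat.cast_sub hkm.le, sub_sub_cancel, mul_comm] at this

end condStar

/-- If `(m, N, a)` satisfies condition (⋆) and `n` is an integer with `gcd(n, m) = 1` and
`2n ≢ 0 (mod m)`, then `d_n·d_{m−n}` is `0` or `N − 3`; if nonzero then
`{d_n, d_{m−n}} = {1, N − 3}`. -/
theorem star_product_dichotomy (m N : ℕ) (a : Fin N → ℤ)
    (htriple : IsTriple m N a) (hstar : CondStar m N a)
    (n : ℤ) (hn : Int.gcd n m = 1) (h2n : ¬ (m : ℤ) ∣ 2 * n) :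
    (hodgeDim m N a n * hodgeDim m N a ((m : ℤ) - n) = 0 ∨
      hodgeDim m N a n * hodgeDim m N a ((m : ℤ) - n) = (N : ℚ) - 3) ∧
    (hodgeDim m N a n * hodgeDim m N a ((m : ℤ) - n) ≠ 0 →
      ((hodgeDim m N a n = 1 ∧ hodgeDim m N a ((m : ℤ) - n) = (N : ℚ) - 3) ∨
       (hodgeDim m N a n = (N : ℚ) - 3 ∧ hodgeDim m N a ((m : ℤ) - n) = 1))) := by
  have hprod := hodgeDim_mul_le_of_condStar htriple hstar h2n
  obtain ⟨hm2, -, hbounds, hgcd, hdvd⟩ := htriple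
  have hm : 0 < m := by omega
  have hmn : ¬ (m : ℤ) ∣ n := fun h ↦ h2n (dvd_mul_of_dvd_right h 2)
  have hsum := hodgeDim_add_hodgeDim_sub hm
    (fun i ↦ Int.not_dvd_of_pos_of_lt (hbounds i).1 (by linarith [(hbounds i).2]))
    (Int.isCoprime_iff_gcd_eq_one.mpr hn)
  have hx := hodgeDim_nonneg hm hgcd hdvd hmn
  have hy := hodgeDim_nonneg hm hgcd hdvd ((dvd_sub_right dvd_rfl).not.mpr hmn)
  obtain ⟨x, hx'⟩ := exists_hodgeDim_eq_intCast hdvd n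
  obtain ⟨y, hy'⟩ := exists_hodgeDim_eq_intCast hdvd (m - n)
  simp only [hx', hy'] at hsum hprod hx hy ⊢
  have := Int.mul_eq_zero_or_of_add_eq_of_mul_le (k := N - 3) (by exact_mod_cast hx)
    (by exact_mod_cast hy) (by qify; linarith) (by qify; linarith)
  exact_mod_cast this
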